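/- arXiv:2604.26757 — 4 statements merged into one kernel-verified Lean document; each statement's English description precedes it below -/
import Mathlib

section
/- Let s be a nonzero complex number and γ = s², and define R̂_{v,j} = s^{v+j-2} · Σ_{k=1}^{min(v,j)} C(v-1,k-1)·C(j-1,k-1)·(1 - 1/γ)^{k-1} for positive integers v, j. Then for every positive integer j, the following identity of formal power series in ε over ℂ holds: (1 − sε)^j · Σ_{v=1}^{∞} R̂_{v,j} ε^{v-1} = s^{j-1} · (1 − s^{-1}ε)^{j-1}. Equivalently, the generating function Σ_{v≥1} R̂_{v,j} ε^{v-1} equals s^{j-1}(1 − s^{-1}ε)^{j-1}/(1 − sε)^{j}. -/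
/-- The entry `R̂_{v,j}` (for `1 ≤ v, j`), where
`R̂_{v,j} = s^{v+j-2} · Σ_{k=1}^{min(v,j)} C(v-1,k-1)·C(j-1,k-1)·(1 - 1/s²)^{k-1}`. -/
noncomputable def Rhat (s : ℂ) (v j : ℕ) : ℂ :=
  s ^ (v + j - 2) *
    ∑ k ∈ Finset.range (min v j),
      (Nat.choose (v - 1) k : ℂ) * (Nat.choose (j - 1) k : ℂ) * (1 - 1 / s ^ 2) ^ k

/-!
Expanding `R̂_{v+1,n+1}` in `k`, the series is `s^n Σ_k C(n,k) tᵏ Σ_v C(v,k) (sε)^v` with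
`t = 1 - 1/s²`, and `Σ_v C(v,k) x^v = x^k / (1 - x)^(k+1)`. After multiplying by `(1 - sε)^(n+1)`
the sum over `k` is the binomial expansion of `(t s ε + (1 - s ε))^n`, and `s - t s = s⁻¹`.
-/

namespace PowerSeries

open Finset

variable {R : Type*} [CommRing R]

theorem mk_choose_eq_X_pow_mul (k : ℕ) :
    (mk fun n => (n.choose k : R)) = X ^ k * mk fun n => ((k + n).choose k : R) := by
  ext n
  rw [coeff_mk, coeff_X_pow_mul']
  split_ifs with h
  · rw [coeff_mk, Nat.add_sub_cancel' h]
  · rw [Nat.choose_eq_zero_of_lt (not_le.mp h), Nat.cast_zero]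

theorem mk_choose_mul_one_sub_X_pow (k : ℕ) :
    (mk fun n => (n.choose k : R)) * (1 - X) ^ (k + 1) = X ^ k := by
  rw [mk_choose_eq_X_pow_mul, mul_assoc, mk_add_choose_mul_one_sub_pow_eq_one, mul_one]

theorem mk_choose_mul_pow_mul_one_sub_C_mul_X_pow (a : R) (k : ℕ) :
    (mk fun n => a ^ n * n.choose k) * (1 - C a * X) ^ (k + 1) = (C a * X) ^ k := by
  have h := congrArg (rescale a) (mk_choose_mul_one_sub_X_pow (R := R) k)
  rwa [map_mul, map_pow, map_pow, map_sub, map_one, rescale_X, rescale_mk] at h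

theorem mk_pow_mul_sum_choose_mul_choose (a b : R) (n : ℕ) :
    (mk fun v => a ^ v * ∑ k ∈ range (n + 1), (v.choose k : R) * n.choose k * b ^ k) =
      ∑ k ∈ range (n + 1), C (n.choose k * b ^ k : R) * mk fun v => a ^ v * v.choose k := by
  ext v
  simp only [coeff_mk, map_sum, coeff_C_mul, mul_sum]
  exact sum_congr rfl fun k _ => by ring

theorem one_sub_C_mul_X_pow_mul_mk_sum_choose_mul_choose (a b : R) (n : ℕ) :
    (1 - C a * X) ^ (n + 1) *
        (mk fun v => a ^ v * ∑ k ∈ range (n + 1), (v.choose k : R) * n.choose k * b ^ k) =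
      (1 - C (a - a * b) * X) ^ n := by
  have hterm : ∀ k ∈ range (n + 1),
      (1 - C a * X) ^ (n + 1) * (C (n.choose k * b ^ k : R) * mk fun v => a ^ v * v.choose k) =
        (C b * (C a * X)) ^ k * (1 - C a * X) ^ (n - k) * (n.choose k : R⟦X⟧) := by
    intro k hk
    have hsplit : n + 1 = n - k + (k + 1) := by grind
    rw [hsplit, pow_add, map_mul, map_pow, map_natCast, mul_pow]
    linear_combination (C b ^ k * (1 - C a * X) ^ (n - k) * (n.choose k : R⟦X⟧)) *
      mk_choose_mul_pow_mul_one_sub_C_mul_X_pow a k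
  rw [mk_pow_mul_sum_choose_mul_choose, mul_sum, sum_congr rfl hterm, ← add_pow]
  simp only [map_sub, map_mul]
  ring

end PowerSeries

open Finset PowerSeries in
theorem mk_Rhat_succ_succ (s : ℂ) (n : ℕ) :
    (mk fun v => Rhat s (v + 1) (n + 1)) =
      C (s ^ n) * mk fun v =>
        s ^ v * ∑ k ∈ range (n + 1), (v.choose k : ℂ) * n.choose k * (1 - 1 / s ^ 2) ^ k := by
  ext v
  have hdeg : v + 1 + (n + 1) - 2 = n + v := by omega
  have hmin : range (min (v + 1) (n + 1)) ⊆ range (n + 1) :=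
    range_subset_range.mpr (min_le_right _ _)
  rw [coeff_C_mul, coeff_mk, coeff_mk, Rhat, Nat.add_sub_cancel, Nat.add_sub_cancel, hdeg, pow_add,
    mul_assoc, sum_subset hmin]
  intro k _ hk
  rw [Nat.choose_eq_zero_of_lt (by grind), Nat.cast_zero, zero_mul, zero_mul]

open PowerSeries in
theorem Rhat_generating_function_general (s : ℂ) (j : ℕ) (hj : 0 < j) :
    (1 - PowerSeries.C s * PowerSeries.X) ^ j *
        PowerSeries.mk (fun v => Rhat s (v + 1) j) =
      PowerSeries.C (s ^ (j - 1)) *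
        (1 - PowerSeries.C s⁻¹ * PowerSeries.X) ^ (j - 1) := by
  obtain ⟨n, rfl⟩ := Nat.exists_eq_add_of_lt hj
  have hcoef : s - s * (1 - 1 / s ^ 2) = s⁻¹ := by
    rcases eq_or_ne s 0 with rfl | hs0
    · simp
    · field_simp; ring
  rw [zero_add, Nat.add_sub_cancel, mk_Rhat_succ_succ, mul_left_comm,
    one_sub_C_mul_X_pow_mul_mk_sum_choose_mul_choose, hcoef]

open PowerSeries in
theorem Rhat_generating_function (s : ℂ) (hs : s ≠ 0) (j : ℕ) (hj : 0 < j) :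
    (1 - PowerSeries.C s * PowerSeries.X) ^ j *
        PowerSeries.mk (fun v => Rhat s (v + 1) j) =
      PowerSeries.C (s ^ (j - 1)) *
        (1 - PowerSeries.C s⁻¹ * PowerSeries.X) ^ (j - 1) :=
  Rhat_generating_function_general s j hj
end

section
/- Let s be a nonzero complex number and γ = s², and define R̂_{v,j} = s^{v+j-2} · Σ_{k=1}^{min(v,j)} C(v-1,k-1)·C(j-1,k-1)·(1 - 1/γ)^{k-1} for positive integers v, j. Then for all positive integers v and j: R̂_{v+1,j+1} − s·R̂_{v+1,j} = s·R̂_{v,j+1} − R̂_{v,j}, and moreover R̂_{1,j+1} = s·R̂_{1,j}. -/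
open Finset

lemma sum_extend (s : ℂ) (v j N : ℕ) (hv : 0 < v) (hj : 0 < j) (hN : min v j ≤ N) :
    ∑ k ∈ range (min v j),
      (Nat.choose (v - 1) k : ℂ) * (Nat.choose (j - 1) k : ℂ) * (1 - 1 / s ^ 2) ^ k
    = ∑ k ∈ range N,
      (Nat.choose (v - 1) k : ℂ) * (Nat.choose (j - 1) k : ℂ) * (1 - 1 / s ^ 2) ^ k := by
  apply Finset.sum_subset
  · intro k hk
    simp only [Finset.mem_range] at hk ⊢
    omega
  · intro k hk hk'
    simp only [Finset.mem_range, not_lt] at hk hk'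
    rcases le_or_gt v j with h | h
    · rw [min_eq_left h] at hk'
      have : v - 1 < k := by omega
      simp [Nat.choose_eq_zero_of_lt this]
    · rw [min_eq_right h.le] at hk'
      have : j - 1 < k := by omega
      simp [Nat.choose_eq_zero_of_lt this]

lemma key (s : ℂ) (hs : s ≠ 0) (a b M : ℕ) (hM : a < M) :
    s ^ 2 * (∑ k ∈ range (M+1), (Nat.choose (a+1) k : ℂ) * (Nat.choose (b+1) k) * (1 - 1/s^2) ^ k)
    - s ^ 2 * (∑ k ∈ range (M+1), (Nat.choose (a+1) k : ℂ) * (Nat.choose b k) * (1 - 1/s^2) ^ k)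
    - s ^ 2 * (∑ k ∈ range (M+1), (Nat.choose a k : ℂ) * (Nat.choose (b+1) k) * (1 - 1/s^2) ^ k)
    + (∑ k ∈ range (M+1), (Nat.choose a k : ℂ) * (Nat.choose b k) * (1 - 1/s^2) ^ k) = 0 := by
  set x : ℂ := 1 - 1/s^2 with hx
  have hsx : s ^ 2 * x = s ^ 2 - 1 := by
    rw [hx]; field_simp
  rw [Finset.sum_range_succ' (fun k => (Nat.choose (a+1) k : ℂ) * (Nat.choose (b+1) k) * x ^ k),
      Finset.sum_range_succ' (fun k => (Nat.choose (a+1) k : ℂ) * (Nat.choose b k) * x ^ k),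
      Finset.sum_range_succ' (fun k => (Nat.choose a k : ℂ) * (Nat.choose (b+1) k) * x ^ k),
      Finset.sum_range_succ' (fun k => (Nat.choose a k : ℂ) * (Nat.choose b k) * x ^ k)]
  simp only [Nat.choose_zero_right, Nat.cast_one, pow_zero, one_mul, mul_one]
  -- telescoping sum
  have tel : ∑ k ∈ range M,
      ((Nat.choose a k : ℂ) * (Nat.choose b k) * x ^ k
        - (Nat.choose a (k+1) : ℂ) * (Nat.choose b (k+1)) * x ^ (k+1))
      = 1 := by
    rw [Finset.sum_range_sub' (fun k => (Nat.choose a k : ℂ) * (Nat.choose b k) * x ^ k)]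
    simp [Nat.choose_eq_zero_of_lt hM]
  -- termwise identity
  have term : ∀ k ∈ range M,
      s ^ 2 * ((Nat.choose (a+1) (k+1) : ℂ) * (Nat.choose (b+1) (k+1)) * x ^ (k+1))
      - s ^ 2 * ((Nat.choose (a+1) (k+1) : ℂ) * (Nat.choose b (k+1)) * x ^ (k+1))
      - s ^ 2 * ((Nat.choose a (k+1) : ℂ) * (Nat.choose (b+1) (k+1)) * x ^ (k+1))
      + (Nat.choose a (k+1) : ℂ) * (Nat.choose b (k+1)) * x ^ (k+1)
      = (s ^ 2 - 1) * ((Nat.choose a k : ℂ) * (Nat.choose b k) * x ^ k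
          - (Nat.choose a (k+1) : ℂ) * (Nat.choose b (k+1)) * x ^ (k+1)) := by
    intro k _
    have h1 : (Nat.choose (a+1) (k+1) : ℂ) = Nat.choose a k + Nat.choose a (k+1) := by
      push_cast [Nat.choose_succ_succ]; ring
    have h2 : (Nat.choose (b+1) (k+1) : ℂ) = Nat.choose b k + Nat.choose b (k+1) := by
      push_cast [Nat.choose_succ_succ]; ring
    rw [h1, h2]
    have hxp : x ^ (k+1) = x ^ k * x := by ring
    rw [hxp]
    linear_combination ((Nat.choose a k : ℂ) * (Nat.choose b k)) * x ^ k * hsx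
  have hsum := Finset.sum_congr rfl term
  rw [← Finset.mul_sum, tel] at hsum
  -- split the sum of combinations into combinations of sums
  rw [Finset.sum_add_distrib, Finset.sum_sub_distrib, Finset.sum_sub_distrib,
      ← Finset.mul_sum, ← Finset.mul_sum, ← Finset.mul_sum] at hsum
  linear_combination hsum

lemma Rhat_eq (s : ℂ) (v j N : ℕ) (hv : 0 < v) (hj : 0 < j) (hN : min v j ≤ N) :
    Rhat s v j = s ^ (v + j - 2) *
      ∑ k ∈ range N,
        (Nat.choose (v - 1) k : ℂ) * (Nat.choose (j - 1) k : ℂ) * (1 - 1 / s ^ 2) ^ k := by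
  rw [Rhat, sum_extend s v j N hv hj hN]

theorem Rhat_shift_relations (s : ℂ) (hs : s ≠ 0) :
    (∀ v j : ℕ, 0 < v → 0 < j →
        Rhat s (v + 1) (j + 1) - s * Rhat s (v + 1) j =
          s * Rhat s v (j + 1) - Rhat s v j) ∧
      ∀ j : ℕ, 0 < j → Rhat s 1 (j + 1) = s * Rhat s 1 j := by
  constructor
  · intro v j hv hj
    obtain ⟨a, rfl⟩ : ∃ a, v = a + 1 := ⟨v - 1, by omega⟩
    obtain ⟨b, rfl⟩ : ∃ b, j = b + 1 := ⟨j - 1, by omega⟩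
    have E := key s hs a b (a + b + 2) (by omega)
    rw [Rhat_eq s (a+1+1) (b+1+1) (a+b+3) (by omega) (by omega) (by omega),
        Rhat_eq s (a+1+1) (b+1) (a+b+3) (by omega) (by omega) (by omega),
        Rhat_eq s (a+1) (b+1+1) (a+b+3) (by omega) (by omega) (by omega),
        Rhat_eq s (a+1) (b+1) (a+b+3) (by omega) (by omega) (by omega)]
    have p11 : a+1+1 + (b+1+1) - 2 = a+b+2 := by omega
    have p10 : a+1+1 + (b+1) - 2 = a+b+1 := by omega
    have p01 : a+1 + (b+1+1) - 2 = a+b+1 := by omega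
    have p00 : a+1 + (b+1) - 2 = a+b := by omega
    have q1 : a+1+1-1 = a+1 := rfl
    have q2 : b+1+1-1 = b+1 := rfl
    have q3 : a+1-1 = a := rfl
    have q4 : b+1-1 = b := rfl
    rw [p11, p10, p01, p00, q1, q2, q3, q4]
    have h3 : a + b + 3 = (a + b + 2) + 1 := rfl
    rw [h3]
    linear_combination (s ^ (a+b)) * E
  · intro j hj
    obtain ⟨b, rfl⟩ : ∃ b, j = b + 1 := ⟨j - 1, by omega⟩
    rw [Rhat, Rhat]
    have m1 : min 1 (b+1+1) = 1 := by omega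
    have m2 : min 1 (b+1) = 1 := by omega
    rw [m1, m2]
    simp only [Finset.sum_range_one, Nat.choose_zero_right, pow_zero, Nat.cast_one, one_mul,
      mul_one]
    have e1 : 1 + (b+1+1) - 2 = b + 1 := by omega
    have e2 : 1 + (b+1) - 2 = b := by omega
    rw [e1, e2, pow_succ]
    ring
end

section
/- Let s be a nonzero complex number, γ = s², N₁ a positive integer, and define R̂_{v,j} = s^{v+j-2} · Σ_{k=1}^{min(v,j)} C(v-1,k-1)·C(j-1,k-1)·(1 - 1/γ)^{k-1} for positive integers v, j. Then for every positive integer j the following polynomial identity in ε holds in ℂ[ε]: (1 − sε) · Σ_{v=1}^{N₁} R̂_{v,j+1} ε^{v-1} + (ε − s) · Σ_{v=1}^{N₁} R̂_{v,j} ε^{v-1} = (R̂_{N₁,j} − s·R̂_{N₁,j+1}) · ε^{N₁}. -/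
/-!
Write `R̂_{a+1,b+1} = s^{a+b} F(a,b)` with `F(a,b) = Σ_k C(a,k) C(b,k) t^k` and `t = 1 - 1/s²`.
Pascal's rule in both arguments gives `F(a+1,b+1) - F(a,b+1) - F(a+1,b) + F(a,b) = t F(a,b)`,
which for this value of `t` becomes the five-point recursion
`R̂_{v+1,j+1} + R̂_{v,j} = s R̂_{v,j+1} + s R̂_{v+1,j}`. Together with `R̂_{1,j+1} = s R̂_{1,j}`,
this recursion makes the coefficient of `ε^v` on the left-hand side vanish for every `v < N₁`,
leaving only the boundary term.
-/

open Finset Polynomial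

section ChoosePairSum

variable {R : Type*} [CommRing R]

def choosePairSum (t : R) (n a b : ℕ) : R :=
  ∑ k ∈ range n, (a.choose k : R) * (b.choose k : R) * t ^ k

theorem choosePairSum_eq_of_min_lt (t : R) {n m a b : ℕ} (hn : min a b < n) (hm : min a b < m) :
    choosePairSum t n a b = choosePairSum t m a b := by
  suffices ∀ n, min a b < n → choosePairSum t n a b = choosePairSum t (min a b + 1) a b by
    rw [this n hn, this m hm]
  intro n hn
  refine (sum_subset (range_subset_range.2 hn) fun k _ hk => ?_).symm
  simp only [mem_range, not_lt] at hk
  rcases le_total a b with hab | hab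
  · simp [Nat.choose_eq_zero_of_lt (show a < k by omega)]
  · simp [Nat.choose_eq_zero_of_lt (show b < k by omega)]

theorem choosePairSum_succ_succ (t : R) (n a b : ℕ) :
    choosePairSum t (n + 1) (a + 1) (b + 1) - choosePairSum t (n + 1) a (b + 1)
        - choosePairSum t (n + 1) (a + 1) b + choosePairSum t (n + 1) a b
      = t * choosePairSum t n a b := by
  simp only [choosePairSum, ← sum_sub_distrib, ← sum_add_distrib, mul_sum]
  rw [sum_range_succ']
  refine (add_eq_left.2 (by simp)).trans (sum_congr rfl fun k _ => ?_)
  push_cast [Nat.choose_succ_succ']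
  ring

end ChoosePairSum

theorem Rhat_succ_succ (s : ℂ) (a b : ℕ) {n : ℕ} (hn : min a b < n) :
    Rhat s (a + 1) (b + 1) = s ^ (a + b) * choosePairSum (1 - 1 / s ^ 2) n a b := by
  rw [choosePairSum_eq_of_min_lt _ hn (Nat.lt_succ_self _), Rhat, choosePairSum, show a + 1 + (b + 1) - 2 = a + b by omega, Nat.add_min_add_right]
  simp

theorem Rhat_one_succ (s : ℂ) (b : ℕ) : Rhat s 1 (b + 1) = s ^ b := by
  simp [Rhat_succ_succ s 0 b (n := 1) (by simp), choosePairSum]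

theorem Rhat_add_two_add_two (s : ℂ) (hs : s ≠ 0) (a b : ℕ) :
    Rhat s (a + 2) (b + 2) + Rhat s (a + 1) (b + 1)
      = s * Rhat s (a + 1) (b + 2) + s * Rhat s (a + 2) (b + 1) := by
  have pascal := choosePairSum_succ_succ (1 - 1 / s ^ 2) (a + 1) a b
  rw [choosePairSum_eq_of_min_lt _ (m := a + 1) (by omega : min a b < a + 1 + 1) (by omega)]
    at pascal
  rw [Rhat_succ_succ s (a + 1) (b + 1) (n := a + 2) (by omega),
    Rhat_succ_succ s a b (n := a + 1) (by omega),
    Rhat_succ_succ s a (b + 1) (n := a + 2) (by omega),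
    Rhat_succ_succ s (a + 1) b (n := a + 2) (by omega)]
  field_simp at pascal ⊢
  linear_combination s ^ (a + b) * pascal

/-- The coefficient of `X ^ (v + 1)` on the left is `q v - s * p v + p (v + 1) - s * q (v + 1)`,
which the recursion kills for `v < n`. -/
theorem truncated_generating_recursion {R : Type*} [CommRing R] (s : R) (p q : ℕ → R)
    (h0 : p 0 = s * q 0) (hrec : ∀ v, p (v + 1) + q v = s * p v + s * q (v + 1)) (n : ℕ) :
    (1 - C s * X) * ∑ v ∈ range (n + 1), C (p v) * X ^ v
        + (X - C s) * ∑ v ∈ range (n + 1), C (q v) * X ^ v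
      = C (q n - s * p n) * X ^ (n + 1) := by
  induction n with
  | zero =>
    simp only [zero_add, sum_range_one, pow_zero, mul_one, pow_one, h0, map_sub, map_mul]
    ring
  | succ n ih =>
    rw [sum_range_succ _ (n + 1), sum_range_succ _ (n + 1), mul_add, mul_add, add_add_add_comm, ih,
      eq_sub_of_add_eq' (hrec n)]
    simp only [map_sub, map_mul, map_add]
    ring

theorem sum_Icc_one_mul_X_pow_sub_one {R : Type*} [Semiring R] (f : ℕ → R) (n : ℕ) :
    ∑ v ∈ Icc 1 n, C (f v) * X ^ (v - 1) = ∑ v ∈ range n, C (f (v + 1)) * X ^ v := by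
  rw [← Ico_add_one_right_eq_Icc, sum_Ico_eq_sum_range]
  simp [add_comm]

open Polynomial in
theorem Rhat_truncated_generating_recursion (s : ℂ) (hs : s ≠ 0) (N₁ : ℕ) (hN₁ : 0 < N₁)
    (j : ℕ) (hj : 0 < j) :
    (1 - Polynomial.C s * Polynomial.X) *
          (∑ v ∈ Finset.Icc 1 N₁, Polynomial.C (Rhat s v (j + 1)) * Polynomial.X ^ (v - 1)) +
        (Polynomial.X - Polynomial.C s) *
          (∑ v ∈ Finset.Icc 1 N₁, Polynomial.C (Rhat s v j) * Polynomial.X ^ (v - 1)) =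
      Polynomial.C (Rhat s N₁ j - s * Rhat s N₁ (j + 1)) * Polynomial.X ^ N₁ := by
  obtain ⟨n, rfl⟩ := Nat.exists_eq_add_of_lt hN₁
  obtain ⟨b, rfl⟩ := Nat.exists_eq_add_of_lt hj
  simp only [zero_add, sum_Icc_one_mul_X_pow_sub_one]
  exact truncated_generating_recursion s (fun v => Rhat s (v + 1) (b + 2))
    (fun v => Rhat s (v + 1) (b + 1)) (by simp [Rhat_one_succ, pow_succ, mul_comm])
    (fun v => Rhat_add_two_add_two s hs v b) n
end

section
/- Let s be a nonzero complex number, γ = s², N₁ a positive integer, and define R̂_{v,j} = s^{v+j-2} · Σ_{k=1}^{min(v,j)} C(v-1,k-1)·C(j-1,k-1)·(1 - 1/γ)^{k-1} for positive integers v, j. Then for every positive integer j: (1 − γ) · Σ_{k=1}^{N₁} s^{N₁-k} · R̂_{k,j} = R̂_{N₁,j} − s·R̂_{N₁,j+1}. -/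
open Finset

theorem sum_range_choose_mul_choose_pascal {R : Type*} [CommRing R] (x : R) (m i M : ℕ) :
    (∑ k ∈ range (M + 1), (m.choose k : R) * ((i + 1).choose k : R) * x ^ k)
      + (∑ k ∈ range (M + 1), ((m + 1).choose k : R) * (i.choose k : R) * x ^ k)
      - (∑ k ∈ range (M + 1), ((m + 1).choose k : R) * ((i + 1).choose k : R) * x ^ k)
      = (1 - x) * ∑ k ∈ range (M + 1), (m.choose k : R) * (i.choose k : R) * x ^ k
        + (m.choose M : R) * (i.choose M : R) * x ^ (M + 1) := by
  induction M with
  | zero => simp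
  | succ M ih =>
    simp only [sum_range_succ] at ih ⊢
    rw [Nat.choose_succ_succ m M, Nat.choose_succ_succ i M]
    push_cast at ih ⊢
    linear_combination ih

theorem sum_Icc_pow_sub_mul_succ {R : Type*} [CommSemiring R] (s : R) (f : ℕ → R) (N : ℕ) :
    ∑ k ∈ Icc 1 (N + 1), s ^ (N + 1 - k) * f k =
      s * ∑ k ∈ Icc 1 N, s ^ (N - k) * f k + f (N + 1) := by
  rw [sum_Icc_succ_top (by omega), Nat.sub_self, pow_zero, one_mul, mul_sum]
  congr 1
  refine sum_congr rfl fun k hk => ?_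
  rw [Nat.sub_add_comm (mem_Icc.1 hk).2, pow_succ]
  ring

theorem Rhat_succ_succ_eq_sum_range (s : ℂ) (m i M : ℕ) (hM : min (m + 1) (i + 1) ≤ M) :
    Rhat s (m + 1) (i + 1) =
      s ^ (m + i) *
        ∑ k ∈ range M, (m.choose k : ℂ) * (i.choose k : ℂ) * (1 - 1 / s ^ 2) ^ k := by
  rw [Rhat, show m + 1 + (i + 1) - 2 = m + i by omega, Nat.add_sub_cancel, Nat.add_sub_cancel]
  congr 1
  refine sum_subset (range_subset_range.2 hM) fun k _ hk => ?_
  rcases min_le_iff.1 (not_lt.1 (mem_range.not.1 hk)) with h | h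
  · simp [Nat.choose_eq_zero_of_lt (by omega : m < k)]
  · simp [Nat.choose_eq_zero_of_lt (by omega : i < k)]

theorem Rhat_one_left (s : ℂ) (i : ℕ) : Rhat s 1 (i + 1) = s ^ i := by
  simp [Rhat, show 1 + (i + 1) - 2 = i by omega]

theorem Rhat_local_relation (s : ℂ) (hs : s ≠ 0) (m i : ℕ) :
    s * Rhat s (m + 1) (i + 1) + s * Rhat s (m + 2) (i + 2) =
      s ^ 2 * Rhat s (m + 1) (i + 2) + s ^ 2 * Rhat s (m + 2) (i + 1) := by
  rw [Rhat_succ_succ_eq_sum_range s m i (m + 2) (by omega),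
    Rhat_succ_succ_eq_sum_range s (m + 1) (i + 1) (m + 2) (by omega),
    Rhat_succ_succ_eq_sum_range s m (i + 1) (m + 2) (by omega),
    Rhat_succ_succ_eq_sum_range s (m + 1) i (m + 2) (by omega)]
  have hpascal := sum_range_choose_mul_choose_pascal (1 - 1 / s ^ 2) m i (m + 1)
  rw [Nat.choose_succ_self, Nat.cast_zero, zero_mul, zero_mul, add_zero] at hpascal
  have hx : s ^ 2 * (1 - (1 - 1 / s ^ 2)) = 1 := by field_simp; ring
  linear_combination (-s ^ (m + i + 3)) * hpascal
    - (s ^ (m + i + 1) * ∑ k ∈ range (m + 2), (m.choose k : ℂ) * (i.choose k : ℂ)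
      * (1 - 1 / s ^ 2) ^ k) * hx

theorem Rhat_weighted_column_sum (s : ℂ) (hs : s ≠ 0) (N₁ : ℕ) (hN₁ : 0 < N₁)
    (j : ℕ) (hj : 0 < j) :
    (1 - s ^ 2) * ∑ k ∈ Finset.Icc 1 N₁, s ^ (N₁ - k) * Rhat s k j =
      Rhat s N₁ j - s * Rhat s N₁ (j + 1) := by
  obtain ⟨i, rfl⟩ : ∃ i, j = i + 1 := ⟨j - 1, by omega⟩
  induction N₁, hN₁ using Nat.le_induction with
  | base =>
    rw [Icc_self, sum_singleton, Rhat_one_left, Rhat_one_left]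
    ring
  | succ N hN ih =>
    obtain ⟨m, rfl⟩ : ∃ m, N = m + 1 := ⟨N - 1, by omega⟩
    rw [sum_Icc_pow_sub_mul_succ]
    linear_combination s * ih + Rhat_local_relation s hs m i
end
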